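/- Let M be a symmetric irreducible r×r 0–1 transition matrix, let A : Σ̂_M → ℝ be Lipschitz continuous, and fix y⁰ ∈ Σ*_M. For each β > 0, let φ_β be the forward effective potential for βA normalized by φ_β(y⁰) = 0. Then for every sequence β_n → ∞ there exist a subsequence β_{n_k} and a Lipschitz continuous function V : Σ*_M → ℝ with V(y⁰) = 0 and Lip(V) ≤ ‖A‖₀ + Lip(A) such that φ_{β_{n_k}}/β_{n_k} → V uniformly. -/

import Mathlib

open MeasureTheory Filter Topology Real

/-- The one-sided subshift of finite type defined by the 0-1 transition matrix `M`:
sequences `x : ℕ → Fin r` with `M (x j) (x (j+1)) = 1` for all `j`. -/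
abbrev Shift (r : ℕ) (M : Fin r → Fin r → Bool) : Type :=
  {x : ℕ → Fin r // ∀ j : ℕ, M (x j) (x (j + 1)) = true}

variable {r : ℕ} {M : Fin r → Fin r → Bool}

/-- The matrix `M` is irreducible: any symbol can be joined to any other by an
admissible path of positive length. -/
def Irred (M : Fin r → Fin r → Bool) : Prop :=
  ∀ i j : Fin r, ∃ n : ℕ, ∃ w : Fin (n + 2) → Fin r,
    w 0 = i ∧ w (Fin.last (n + 1)) = j ∧
    ∀ k : Fin (n + 1), M (w k.castSucc) (w k.succ) = true

/-- The left shift map on the subshift. -/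
def shiftMap (x : Shift r M) : Shift r M :=
  ⟨fun j => x.1 (j + 1), fun j => x.2 (j + 1)⟩

/-- The metric `d(x,y) = Λ^k`, `k = min { j : x_j ≠ y_j }`, `d(x,x) = 0`. -/
noncomputable def shiftDist (Λ : ℝ) (x y : Shift r M) : ℝ :=
  letI := Classical.decEq (Shift r M)
  if h : x = y then 0
  else Λ ^ Nat.find (show ∃ j : ℕ, x.1 j ≠ y.1 j by
    by_contra hc
    push_neg at hc
    exact h (Subtype.ext (funext hc)))

/-- `φ` is Lipschitz with constant `K` for the metric `shiftDist Λ`. -/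
def LipBnd (Λ K : ℝ) (φ : Shift r M → ℝ) : Prop :=
  ∀ x y : Shift r M, |φ x - φ y| ≤ K * shiftDist Λ x y

/-- `φ` is Lipschitz continuous for the metric `shiftDist Λ`. -/
def IsLip (Λ : ℝ) (φ : Shift r M → ℝ) : Prop :=
  ∃ K : ℝ, LipBnd Λ K φ

/-- The best Lipschitz constant of `φ`. -/
noncomputable def lipC (Λ : ℝ) (φ : Shift r M → ℝ) : ℝ :=
  sInf {K : ℝ | 0 ≤ K ∧ LipBnd Λ K φ}

/-- The uniform norm `‖φ‖₀`. -/
noncomputable def unorm (φ : Shift r M → ℝ) : ℝ :=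
  ⨆ x : Shift r M, |φ x|

/-- An observable on the natural extension `Σ̂_M ⊂ Σ*_M × Σ_M` (with `Σ*_M`
canonically identified with `Σ_M`), as a function of `(y, x)`; it is Lipschitz with
constant `K` for the max-metric. -/
def LipBnd2 (Λ K : ℝ) (A : Shift r M → Shift r M → ℝ) : Prop :=
  ∀ y x y' x' : Shift r M,
    |A y x - A y' x'| ≤ K * max (shiftDist Λ y y') (shiftDist Λ x x')

/-- `A` is Lipschitz continuous on `Σ̂_M`. -/
def IsLip2 (Λ : ℝ) (A : Shift r M → Shift r M → ℝ) : Prop :=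
  ∃ K : ℝ, LipBnd2 Λ K A

/-- The best Lipschitz constant of the observable `A`. -/
noncomputable def lipC2 (Λ : ℝ) (A : Shift r M → Shift r M → ℝ) : ℝ :=
  sInf {K : ℝ | 0 ≤ K ∧ LipBnd2 Λ K A}

/-- The uniform norm `‖A‖₀` of the observable. -/
noncomputable def unorm2 (A : Shift r M → Shift r M → ℝ) : ℝ :=
  ⨆ p : Shift r M × Shift r M, |A p.1 p.2|

/-- `μ` is a `σ`-invariant Borel probability measure on the subshift. -/
def InvProb (μ : Measure (Shift r M)) : Prop :=
  IsProbabilityMeasure μ ∧ μ.map shiftMap = μ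

/-- Entropy of the cylinder partition of length `n`:
`H_n(μ) = - ∑_{|w| = n} μ([w]) log μ([w])`. -/
noncomputable def cylEnt (μ : Measure (Shift r M)) (n : ℕ) : ℝ :=
  ∑ w : Fin n → Fin r,
    Real.negMulLog ((μ {x : Shift r M | ∀ i : Fin n, x.1 i.1 = w i}).toReal)

/-- The Kolmogorov–Sinai entropy `h_μ(σ)` of an invariant measure on the subshift:
since the cylinder partition is generating and `n ↦ H_n(μ)` is subadditive,
`h_μ(σ) = lim_n H_n(μ)/n = inf_n H_n(μ)/n`. -/
noncomputable def entropy (μ : Measure (Shift r M)) : ℝ :=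
  ⨅ n : ℕ, cylEnt μ (n + 1) / (n + 1)

/-- The operator
`G⁺_A(φ)(y) = sup_{μ ∈ M_σ} [ ∫ (A(y,x) + φ(x)) dμ(x) + h_μ(σ) ]`. -/
noncomputable def Gplus (A : Shift r M → Shift r M → ℝ)
    (φ : Shift r M → ℝ) (y : Shift r M) : ℝ :=
  sSup {t : ℝ | ∃ μ : Measure (Shift r M), InvProb μ ∧
    t = ∫ x, (A y x + φ x) ∂μ + entropy μ}

/-- The maximal ergodic average `max_{μ ∈ M_σ} ∫ B dμ`. -/
noncomputable def maxErg (B : Shift r M → ℝ) : ℝ :=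
  sSup {t : ℝ | ∃ μ : Measure (Shift r M), InvProb μ ∧ t = ∫ x, B x ∂μ}

/-- The quotient norm on functions modulo additive constants:
`‖g‖_c = inf_{γ ∈ ℝ} ‖g + γ‖₀`. -/
noncomputable def cnorm (g : Shift r M → ℝ) : ℝ :=
  ⨅ γ : ℝ, unorm (fun x => g x + γ)

/-!
For `μ` fixed, `∫ (A(y,x) + φ(x)) dμ(x) + h_μ(σ)` is a `Lip(A)`-Lipschitz function of `y`, so
the supremum `G⁺_A(φ)` over invariant measures is `Lip(A)`-Lipschitz too. Applied to `βA`, the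
fixed-point equation makes `φ_β / β` a `Lip(A)`-Lipschitz function vanishing at `y⁰`, for every
`β > 0`. The distance `Λ^k` induces the product topology on the compact space `Σ_M`, so these
functions lie in a compact set of bounded continuous functions by Arzelà–Ascoli, and every
sequence of them has a uniformly convergent subsequence.
-/

open scoped BoundedContinuousFunction

variable {Λ : ℝ}

section ShiftDist

lemma shiftDist_self (x : Shift r M) : shiftDist Λ x x = 0 := by
  simp [shiftDist]

lemma shiftDist_nonneg (hΛ0 : 0 ≤ Λ) (x y : Shift r M) : 0 ≤ shiftDist Λ x y := by
  unfold shiftDist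
  split
  · exact le_rfl
  · positivity

lemma shiftDist_comm (x y : Shift r M) : shiftDist Λ x y = shiftDist Λ y x := by
  unfold shiftDist
  by_cases h : x = y
  · simp [h]
  · rw [dif_neg h, dif_neg (Ne.symm h)]
    have find_eq : ∀ (h₁ : ∃ j, x.1 j ≠ y.1 j) (h₂ : ∃ j, y.1 j ≠ x.1 j),
        Nat.find h₁ = Nat.find h₂ := fun h₁ h₂ =>
      le_antisymm (Nat.find_le (Nat.find_spec h₂).symm) (Nat.find_le (Nat.find_spec h₁).symm)
    rw [find_eq]

lemma shiftDist_le_pow (hΛ0 : 0 ≤ Λ) (hΛ1 : Λ ≤ 1) {p : ℕ} {x y : Shift r M}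
    (h : ∀ i < p, x.1 i = y.1 i) : shiftDist Λ x y ≤ Λ ^ p := by
  unfold shiftDist
  split
  · positivity
  · exact pow_le_pow_of_le_one hΛ0 hΛ1 <| (Nat.le_find_iff _ _).2 fun m hm hne => hne (h m hm)

lemma shiftDist_le_one (hΛ0 : 0 ≤ Λ) (hΛ1 : Λ ≤ 1) (x y : Shift r M) :
    shiftDist Λ x y ≤ 1 := by
  simpa using shiftDist_le_pow hΛ0 hΛ1 (p := 0) (x := x) (y := y) (by omega)

end ShiftDist

section Topology

instance : CompactSpace (Shift r M) := by
  refine (isCompact_iff_compactSpace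
    (s := {x : ℕ → Fin r | ∀ j, M (x j) (x (j + 1)) = true})).1 (IsClosed.isCompact ?_)
  rw [Set.ofPred_forall]
  exact isClosed_iInter fun j =>
    (isClosed_discrete {q : Fin r × Fin r | M q.1 q.2 = true}).preimage
      (by fun_prop : Continuous fun x : ℕ → Fin r => (x j, x (j + 1)))

lemma eventually_shiftDist_le_pow (hΛ0 : 0 ≤ Λ) (hΛ1 : Λ ≤ 1) (x : Shift r M) (p : ℕ) :
    ∀ᶠ z in 𝓝 x, shiftDist Λ z x ≤ Λ ^ p := by
  have hcoord : ∀ i, ∀ᶠ z in 𝓝 x, z.1 i = x.1 i := fun i =>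
    tendsto_pure.1 <| by
      simpa [nhds_discrete] using ((continuous_apply i).comp continuous_subtype_val).tendsto x
  filter_upwards [(Finset.range p).eventually_all.2 fun i _ => hcoord i] with z hz
  exact shiftDist_le_pow hΛ0 hΛ1 fun i hi => hz i (Finset.mem_range.2 hi)

lemma LipBnd.mono {K K' : ℝ} {φ : Shift r M → ℝ} (hφ : LipBnd Λ K φ) (hΛ0 : 0 ≤ Λ)
    (hKK' : K ≤ K') : LipBnd Λ K' φ := fun x y =>
  (hφ x y).trans (mul_le_mul_of_nonneg_right hKK' (shiftDist_nonneg hΛ0 x y))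

lemma equicontinuous_of_lipBnd {ι : Type*} {K : ℝ} {F : ι → Shift r M → ℝ}
    (hΛ0 : 0 ≤ Λ) (hΛ1 : Λ < 1) (hF : ∀ i, LipBnd Λ K (F i)) : Equicontinuous F := by
  intro x
  rw [Metric.equicontinuousAt_iff_right]
  intro ε hε
  obtain ⟨p, hp⟩ : ∃ p : ℕ, |K| * Λ ^ p < ε :=
    (((tendsto_pow_atTop_nhds_zero_of_lt_one hΛ0 hΛ1).const_mul |K|).eventually
      (gt_mem_nhds (by simpa using hε))).exists
  filter_upwards [eventually_shiftDist_le_pow hΛ0 hΛ1.le x p] with z hz i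
  rw [Real.dist_eq]
  calc |F i x - F i z| ≤ |K| * shiftDist Λ x z :=
        ((hF i).mono hΛ0 (le_abs_self K)) x z
    _ ≤ |K| * Λ ^ p := by rw [shiftDist_comm]; gcongr
    _ < ε := hp

lemma LipBnd.continuous {K : ℝ} {φ : Shift r M → ℝ} (hφ : LipBnd Λ K φ) (hΛ0 : 0 ≤ Λ)
    (hΛ1 : Λ < 1) : Continuous φ :=
  (equicontinuous_of_lipBnd (F := fun _ : Unit => φ) hΛ0 hΛ1 fun _ => hφ).continuous ()

lemma IsLip.continuous {φ : Shift r M → ℝ} (hφ : IsLip Λ φ) (hΛ0 : 0 ≤ Λ) (hΛ1 : Λ < 1) :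
    Continuous φ :=
  hφ.choose_spec.continuous hΛ0 hΛ1

def normalizedLip (Λ K : ℝ) (y0 : Shift r M) : Set (Shift r M →ᵇ ℝ) :=
  {f | f y0 = 0 ∧ LipBnd Λ K f}

lemma isCompact_normalizedLip (hΛ0 : 0 ≤ Λ) (hΛ1 : Λ < 1) (K : ℝ) (y0 : Shift r M) :
    IsCompact (normalizedLip Λ K y0) := by
  have hclosed : IsClosed (normalizedLip Λ K y0) := by
    simp only [normalizedLip, LipBnd, Set.ofPred_and, Set.ofPred_forall]
    refine (isClosed_eq (continuous_eval_const y0)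
      continuous_const).inter (isClosed_iInter fun x => isClosed_iInter fun y => ?_)
    exact isClosed_le ((continuous_eval_const x).sub
      (continuous_eval_const y)).abs continuous_const
  refine BoundedContinuousFunction.arzela_ascoli₂ (Metric.closedBall 0 |K|)
    (isCompact_closedBall 0 |K|) _ hclosed (fun f x ⟨hf0, hf⟩ => ?_)
    (equicontinuous_of_lipBnd hΛ0 hΛ1 fun f => f.2.2)
  rw [mem_closedBall_zero_iff, Real.norm_eq_abs]
  calc |f x| = |f x - f y0| := by rw [hf0, sub_zero]
    _ ≤ |K| * shiftDist Λ x y0 := (hf.mono hΛ0 (le_abs_self K)) x y0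
    _ ≤ |K| * 1 := by gcongr; exact shiftDist_le_one hΛ0 hΛ1.le x y0
    _ = |K| := mul_one _

end Topology

section Observable

variable {A : Shift r M → Shift r M → ℝ} {K : ℝ}

lemma LipBnd2.lipBnd_right (hA : LipBnd2 Λ K A) (hΛ0 : 0 ≤ Λ) (y : Shift r M) :
    LipBnd Λ K (A y) := fun x x' => by
  simpa [shiftDist_self, max_eq_right (shiftDist_nonneg hΛ0 x x')] using hA y x y x'

lemma LipBnd2.lipBnd_left (hA : LipBnd2 Λ K A) (hΛ0 : 0 ≤ Λ) (x : Shift r M) :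
    LipBnd Λ K (A · x) := fun y y' => by
  simpa [shiftDist_self, max_eq_left (shiftDist_nonneg hΛ0 y y')] using hA y x y' x

lemma LipBnd2.const_mul (hA : LipBnd2 Λ K A) {β : ℝ} (hβ : 0 ≤ β) :
    LipBnd2 Λ (β * K) (fun y x => β * A y x) := fun y x y' x' => by
  rw [← mul_sub, abs_mul, abs_of_nonneg hβ, mul_assoc]
  exact mul_le_mul_of_nonneg_left (hA y x y' x') hβ

lemma IsLip2.exists_nonneg (hA : IsLip2 Λ A) (hΛ0 : 0 ≤ Λ) : ∃ K, 0 ≤ K ∧ LipBnd2 Λ K A := by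
  obtain ⟨K, hK⟩ := hA
  refine ⟨max K 0, le_max_right _ _, fun y x y' x' => (hK y x y' x').trans ?_⟩
  exact mul_le_mul_of_nonneg_right (le_max_left _ _)
    ((shiftDist_nonneg hΛ0 y y').trans (le_max_left _ _))

lemma lipC2_nonneg (hA : IsLip2 Λ A) (hΛ0 : 0 ≤ Λ) : 0 ≤ lipC2 Λ A :=
  le_csInf (hA.exists_nonneg hΛ0) fun _ hK => hK.1

lemma le_csInf_mul {S : Set ℝ} (hS : S.Nonempty) {a m : ℝ} (hm : 0 ≤ m)
    (h : ∀ K ∈ S, a ≤ K * m) : a ≤ sInf S * m := by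
  rcases hm.eq_or_lt with rfl | hm
  · obtain ⟨K, hK⟩ := hS
    simpa using h K hK
  · rw [← div_le_iff₀ hm]
    exact le_csInf hS fun K hK => (div_le_iff₀ hm).2 (h K hK)

lemma lipBnd2_lipC2 (hA : IsLip2 Λ A) (hΛ0 : 0 ≤ Λ) : LipBnd2 Λ (lipC2 Λ A) A :=
  fun y x y' x' => le_csInf_mul (hA.exists_nonneg hΛ0)
    ((shiftDist_nonneg hΛ0 y y').trans (le_max_left _ _)) fun _ hK => hK.2 y x y' x'

lemma unorm2_nonneg : 0 ≤ unorm2 A :=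
  Real.iSup_nonneg fun _ => abs_nonneg _

end Observable

section Entropy

lemma cylEnt_nonneg (μ : Measure (Shift r M)) [IsProbabilityMeasure μ] (n : ℕ) :
    0 ≤ cylEnt μ n :=
  Finset.sum_nonneg fun _ _ => Real.negMulLog_nonneg ENNReal.toReal_nonneg measureReal_le_one

lemma entropy_le_card (μ : Measure (Shift r M)) [IsProbabilityMeasure μ] : entropy μ ≤ r := by
  have hbdd : BddBelow (Set.range fun n : ℕ => cylEnt μ (n + 1) / (n + 1)) :=
    ⟨0, by rintro _ ⟨n, rfl⟩; exact div_nonneg (cylEnt_nonneg μ _) (by positivity)⟩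
  refine (ciInf_le hbdd 0).trans ?_
  rw [Nat.cast_zero, zero_add, zero_add, div_one]
  calc cylEnt μ 1
      = ∑ w : Fin 1 → Fin r,
          Real.negMulLog (μ {x : Shift r M | ∀ i : Fin 1, x.1 i.1 = w i}).toReal := by
        simp [cylEnt]
    _ ≤ ∑ _w : Fin 1 → Fin r, (1 : ℝ) := Finset.sum_le_sum fun _ _ =>
        (Real.negMulLog_le_one_sub_self ENNReal.toReal_nonneg).trans
          (sub_le_self _ ENNReal.toReal_nonneg)
    _ = r := by simp

end Entropy

section Gplus

-- `0 ≤ c` covers the case where no `a` satisfies `P`, since `sSup ∅ = 0` in `ℝ`.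
lemma sSup_le_sSup_add {α : Type*} {P : α → Prop} {f g : α → ℝ} {c : ℝ} (hc : 0 ≤ c)
    (hg : BddAbove {t | ∃ a, P a ∧ t = g a}) (hfg : ∀ a, P a → f a ≤ g a + c) :
    sSup {t | ∃ a, P a ∧ t = f a} ≤ sSup {t | ∃ a, P a ∧ t = g a} + c := by
  by_cases hP : ∃ a, P a
  · obtain ⟨a₀, ha₀⟩ := hP
    refine csSup_le ⟨f a₀, a₀, ha₀, rfl⟩ ?_
    rintro _ ⟨a, ha, rfl⟩
    exact (hfg a ha).trans (by gcongr; exact le_csSup hg ⟨a, ha, rfl⟩)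
  · push Not at hP
    have hempty : ∀ h : α → ℝ, {t | ∃ a, P a ∧ t = h a} = ∅ := fun h =>
      Set.eq_empty_of_forall_notMem fun _ ⟨a, ha, _⟩ => hP a ha
    simpa [hempty, Real.sSup_empty] using hc

lemma integral_le_integral_add_of_le {X : Type*} [MeasurableSpace X] {μ : Measure X}
    [IsProbabilityMeasure μ] {f g : X → ℝ} {c : ℝ} (hf : Integrable f μ) (hg : Integrable g μ)
    (hfg : ∀ x, f x ≤ g x + c) : ∫ x, f x ∂μ ≤ ∫ x, g x ∂μ + c := by
  calc ∫ x, f x ∂μ ≤ ∫ x, (g x + c) ∂μ := integral_mono hf (hg.add (integrable_const c)) hfg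
    _ = ∫ x, g x ∂μ + c := by simp [integral_add hg (integrable_const c)]

lemma Continuous.integrable_of_invProb {F : Shift r M → ℝ} (hF : Continuous F)
    {μ : Measure (Shift r M)} (hμ : InvProb μ) : Integrable F μ :=
  have := hμ.1
  hF.integrable_of_hasCompactSupport (HasCompactSupport.of_compactSpace F)

lemma bddAbove_integral_add_entropy {F : Shift r M → ℝ} (hF : Continuous F) :
    BddAbove {t | ∃ μ : Measure (Shift r M), InvProb μ ∧ t = ∫ x, F x ∂μ + entropy μ} := by
  obtain ⟨C, hC⟩ := (isCompact_range hF).bddAbove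
  refine ⟨C + r, ?_⟩
  rintro _ ⟨μ, hμ, rfl⟩
  have := hμ.1
  have hint : ∫ x, F x ∂μ ≤ ∫ _x, (0 : ℝ) ∂μ + C :=
    integral_le_integral_add_of_le (hF.integrable_of_invProb hμ) (integrable_const 0)
      fun x => by simpa using hC ⟨x, rfl⟩
  simp only [integral_zero, zero_add] at hint
  linarith [entropy_le_card μ]

variable {A : Shift r M → Shift r M → ℝ} {K : ℝ} {φ : Shift r M → ℝ}

lemma gplus_le_gplus_add (hΛ0 : 0 ≤ Λ) (hΛ1 : Λ < 1) (hA : LipBnd2 Λ K A) (hK : 0 ≤ K)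
    (hφ : Continuous φ) (y y' : Shift r M) :
    Gplus A φ y ≤ Gplus A φ y' + K * shiftDist Λ y y' := by
  have hF : ∀ z, Continuous fun x => A z x + φ x := fun z =>
    ((hA.lipBnd_right hΛ0 z).continuous hΛ0 hΛ1).add hφ
  refine sSup_le_sSup_add (mul_nonneg hK (shiftDist_nonneg hΛ0 y y'))
    (bddAbove_integral_add_entropy (hF y')) fun μ hμ => ?_
  have := hμ.1
  have hint : ∫ x, (A y x + φ x) ∂μ ≤ ∫ x, (A y' x + φ x) ∂μ + K * shiftDist Λ y y' :=
    integral_le_integral_add_of_le ((hF y).integrable_of_invProb hμ)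
      ((hF y').integrable_of_invProb hμ) fun x => by
        linarith [le_of_abs_le (hA.lipBnd_left hΛ0 x y y')]
  linarith

lemma lipBnd_gplus (hΛ0 : 0 ≤ Λ) (hΛ1 : Λ < 1) (hA : LipBnd2 Λ K A) (hK : 0 ≤ K)
    (hφ : Continuous φ) : LipBnd Λ K (Gplus A φ) := fun y y' => by
  have h₁ := gplus_le_gplus_add hΛ0 hΛ1 hA hK hφ y y'
  have h₂ := gplus_le_gplus_add hΛ0 hΛ1 hA hK hφ y' y
  rw [shiftDist_comm] at h₂
  exact abs_sub_le_iff.2 ⟨by linarith, by linarith⟩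

lemma lipBnd_div_of_gplus_eq (hΛ0 : 0 ≤ Λ) (hΛ1 : Λ < 1) (hA : IsLip2 Λ A) {β c : ℝ}
    (hβ : 0 < β) (hφ : IsLip Λ φ) (hG : ∀ y, Gplus (fun y x => β * A y x) φ y = φ y + c) :
    LipBnd Λ (lipC2 Λ A) (fun y => φ y / β) := fun y y' => by
  have h := lipBnd_gplus hΛ0 hΛ1 ((lipBnd2_lipC2 hA hΛ0).const_mul hβ.le)
    (mul_nonneg hβ.le (lipC2_nonneg hA hΛ0)) (hφ.continuous hΛ0 hΛ1) y y'
  rw [hG, hG, add_sub_add_right_eq_sub, mul_assoc] at h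
  rw [← sub_div, abs_div, abs_of_pos hβ, div_le_iff₀ hβ, mul_comm]
  exact h

end Gplus

theorem effective_potential_subsequence_limit_general
    (r : ℕ) (M : Fin r → Fin r → Bool)
    (Λ : ℝ) (hΛ : Λ ∈ Set.Ioo (0 : ℝ) 1)
    (A : Shift r M → Shift r M → ℝ) (hA : IsLip2 Λ A)
    (y0 : Shift r M)
    (φ : ℝ → Shift r M → ℝ) (lam : ℝ → ℝ)
    (heff : ∀ β > (0 : ℝ), IsLip Λ (φ β) ∧ φ β y0 = 0 ∧
      ∀ y, Gplus (fun y x => β * A y x) (φ β) y = φ β y + lam β) :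
    ∀ b : ℕ → ℝ, (∀ n, 0 < b n) → Filter.Tendsto b Filter.atTop Filter.atTop →
      ∃ ι : ℕ → ℕ, StrictMono ι ∧ ∃ V : Shift r M → ℝ,
        V y0 = 0 ∧ LipBnd Λ (unorm2 A + lipC2 Λ A) V ∧
        TendstoUniformly (fun k y => φ (b (ι k)) y / b (ι k)) V Filter.atTop := by
  intro b hb _
  obtain ⟨hΛ0, hΛ1⟩ := hΛ
  have hlip : ∀ n, LipBnd Λ (lipC2 Λ A) (fun y => φ (b n) y / b n) := fun n =>
    lipBnd_div_of_gplus_eq hΛ0.le hΛ1 hA (hb n) (heff _ (hb n)).1 (heff _ (hb n)).2.2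
  let f : ℕ → Shift r M →ᵇ ℝ := fun n =>
    BoundedContinuousFunction.mkOfCompact ⟨_, (hlip n).continuous hΛ0.le hΛ1⟩
  have hf : ∀ n, f n ∈ normalizedLip Λ (lipC2 Λ A) y0 := fun n =>
    ⟨by simp [f, (heff _ (hb n)).2.1], hlip n⟩
  obtain ⟨V, ⟨hV0, hVlip⟩, ι, hι, hlim⟩ :=
    (isCompact_normalizedLip hΛ0.le hΛ1 _ y0).isSeqCompact hf
  exact ⟨ι, hι, V, hV0, hVlip.mono hΛ0.le (le_add_of_nonneg_left unorm2_nonneg),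
    BoundedContinuousFunction.tendsto_iff_tendstoUniformly.1 hlim⟩

/-- With `φ_β` the forward effective potential for `βA` normalized by
`φ_β(y⁰) = 0`, every sequence `β_n → ∞` admits a subsequence `β_{n_k}` along which
`φ_{β_{n_k}}/β_{n_k}` converges uniformly to a Lipschitz `V` with `V(y⁰) = 0` and
`Lip(V) ≤ ‖A‖₀ + Lip(A)`. -/
theorem effective_potential_subsequence_limit
    (r : ℕ) (hr : 2 ≤ r) (M : Fin r → Fin r → Bool)
    (hSym : ∀ i j, M i j = M j i) (hIrr : Irred M)
    (Λ : ℝ) (hΛ : Λ ∈ Set.Ioo (0 : ℝ) 1)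
    (A : Shift r M → Shift r M → ℝ) (hA : IsLip2 Λ A)
    (y0 : Shift r M)
    (φ : ℝ → Shift r M → ℝ) (lam : ℝ → ℝ)
    (heff : ∀ β > (0 : ℝ), IsLip Λ (φ β) ∧ φ β y0 = 0 ∧
      ∀ y, Gplus (fun y x => β * A y x) (φ β) y = φ β y + lam β) :
    ∀ b : ℕ → ℝ, (∀ n, 0 < b n) → Filter.Tendsto b Filter.atTop Filter.atTop →
      ∃ ι : ℕ → ℕ, StrictMono ι ∧ ∃ V : Shift r M → ℝ,
        V y0 = 0 ∧ LipBnd Λ (unorm2 A + lipC2 Λ A) V ∧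
        TendstoUniformly (fun k y => φ (b (ι k)) y / b (ι k)) V Filter.atTop :=
  effective_potential_subsequence_limit_general r M Λ hΛ A hA y0 φ lam heff
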